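/- arXiv:math/0505669 — 7 statements merged into one kernel-verified Lean document; each statement's English description precedes it below -/
import Mathlib

section
/- For all X, Y, Z ∈ m one has 2·g_a(U(X,Y), Z) = g_a(X, [Z,Y]_m) + g_a([Z,X]_m, Y); that is, the explicitly defined map U is the symmetric bilinear map appearing in the Nomizu formula for the Levi-Civita connection of the metric g_a. -/
open LieAlgebra

/-- The setting of the paper: a finite-dimensional real Lie algebra `g` with negative
definite Killing form, decomposed as a direct sum of subspaces `g = h ⊕ m₁ ⊕ m₂ ⊕ m₃`
(here indexed by `Fin 3`, so `m 0 = m₁` etc.), where `h` is a Lie subalgebra, the `mᵢ`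
are pairwise `B`-orthogonal, `0 ≠ [mᵢ, mᵢ₊₁] ⊆ mᵢ₊₂` (mod 3) and `[mᵢ, mᵢ] ⊆ h`.
The projections onto `h` (resp. `mᵢ`) along the decomposition are `ph` (resp. `p i`). -/
structure ThreeModuleSetting (g : Type*) [LieRing g] [LieAlgebra ℝ g]
    [FiniteDimensional ℝ g] where
  hsub : Submodule ℝ g
  m : Fin 3 → Submodule ℝ g
  ph : g →ₗ[ℝ] g
  p : Fin 3 → (g →ₗ[ℝ] g)
  killing_neg : ∀ X : g, X ≠ 0 → killingForm ℝ g X X < 0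
  hsub_lie : ∀ X ∈ hsub, ∀ Y ∈ hsub, ⁅X, Y⁆ ∈ hsub
  ph_mem : ∀ X : g, ph X ∈ hsub
  p_mem : ∀ (i : Fin 3) (X : g), p i X ∈ m i
  sum_eq : ∀ X : g, ph X + p 0 X + p 1 X + p 2 X = X
  proj_spec : ∀ Yh ∈ hsub, ∀ Y0 ∈ m 0, ∀ Y1 ∈ m 1, ∀ Y2 ∈ m 2,
      ph (Yh + Y0 + Y1 + Y2) = Yh ∧ p 0 (Yh + Y0 + Y1 + Y2) = Y0 ∧
      p 1 (Yh + Y0 + Y1 + Y2) = Y1 ∧ p 2 (Yh + Y0 + Y1 + Y2) = Y2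
  orth : ∀ i j : Fin 3, i ≠ j → ∀ X ∈ m i, ∀ Y ∈ m j, killingForm ℝ g X Y = 0
  bracket_cyc : ∀ i : Fin 3, ∀ X ∈ m i, ∀ Y ∈ m (i + 1), ⁅X, Y⁆ ∈ m (i + 2)
  bracket_ne : ∀ i : Fin 3, ∃ X ∈ m i, ∃ Y ∈ m (i + 1), ⁅X, Y⁆ ≠ 0
  bracket_h : ∀ i : Fin 3, ∀ X ∈ m i, ∀ Y ∈ m i, ⁅X, Y⁆ ∈ hsub

namespace ThreeModuleSetting

variable {g : Type*} [LieRing g] [LieAlgebra ℝ g] [FiniteDimensional ℝ g]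
  (S : ThreeModuleSetting g)

/-- The reductive complement `m = m₁ ⊕ m₂ ⊕ m₃`. -/
def msum : Submodule ℝ g := S.m 0 ⊔ S.m 1 ⊔ S.m 2

/-- The projection of `X ∈ g` onto `m` along `h`. -/
def projm (X : g) : g := S.p 0 X + S.p 1 X + S.p 2 X

/-- The inner product `g_a` on `m` determined by the characteristic numbers
`a = (a₁, a₂, a₃)`, namely `g_a(X,Y) = a₁ g₀(X₁,Y₁) + a₂ g₀(X₂,Y₂) + a₃ g₀(X₃,Y₃)`
where `g₀ = -B`. -/
noncomputable def ga (a : Fin 3 → ℝ) (X Y : g) : ℝ :=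
  a 0 * (-(killingForm ℝ g (S.p 0 X) (S.p 0 Y))) +
  a 1 * (-(killingForm ℝ g (S.p 1 X) (S.p 1 Y))) +
  a 2 * (-(killingForm ℝ g (S.p 2 X) (S.p 2 Y)))

/-- The symmetric bilinear map `U : m × m → m`,
`U(X,Y) = ((a₃−a₂)/(2a₁))([X₂,Y₃]+[Y₂,X₃]) + ((a₃−a₁)/(2a₂))([X₁,Y₃]+[Y₁,X₃])
        + ((a₂−a₁)/(2a₃))([X₁,Y₂]+[Y₁,X₂])`. -/
noncomputable def U (a : Fin 3 → ℝ) (X Y : g) : g :=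
  ((a 2 - a 1) / (2 * a 0)) • (⁅S.p 1 X, S.p 2 Y⁆ + ⁅S.p 1 Y, S.p 2 X⁆) +
  ((a 2 - a 0) / (2 * a 1)) • (⁅S.p 0 X, S.p 2 Y⁆ + ⁅S.p 0 Y, S.p 2 X⁆) +
  ((a 1 - a 0) / (2 * a 2)) • (⁅S.p 0 X, S.p 1 Y⁆ + ⁅S.p 0 Y, S.p 1 X⁆)

end ThreeModuleSetting

open LieModule

section Aux

variable {g : Type*} [LieRing g] [LieAlgebra ℝ g] [FiniteDimensional ℝ g]

private lemma main_identity
    (a0 a1 a2 : ℝ) (h0 : a0 ≠ 0) (h1 : a1 ≠ 0) (h2 : a2 ≠ 0)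
    (x0 x1 x2 y0 y1 y2 z0 z1 z2 : g) :
    2 * (a0 * -(killingForm ℝ g (((a2 - a1) / (2 * a0)) • (⁅x1, y2⁆ + ⁅y1, x2⁆)) z0) +
         a1 * -(killingForm ℝ g (((a2 - a0) / (2 * a1)) • (⁅x0, y2⁆ + ⁅y0, x2⁆)) z1) +
         a2 * -(killingForm ℝ g (((a1 - a0) / (2 * a2)) • (⁅x0, y1⁆ + ⁅y0, x1⁆)) z2)) =
      (a0 * -(killingForm ℝ g x0 (⁅z1, y2⁆ + ⁅z2, y1⁆)) +
       a1 * -(killingForm ℝ g x1 (⁅z2, y0⁆ + ⁅z0, y2⁆)) +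
       a2 * -(killingForm ℝ g x2 (⁅z0, y1⁆ + ⁅z1, y0⁆))) +
      (a0 * -(killingForm ℝ g (⁅z1, x2⁆ + ⁅z2, x1⁆) y0) +
       a1 * -(killingForm ℝ g (⁅z2, x0⁆ + ⁅z0, x2⁆) y1) +
       a2 * -(killingForm ℝ g (⁅z0, x1⁆ + ⁅z1, x0⁆) y2)) := by
  have hB : killingForm ℝ g = LieModule.traceForm ℝ g g := rfl
  rw [hB]
  simp only [map_add, map_smul, LinearMap.add_apply, LinearMap.smul_apply, smul_eq_mul]
  rw [traceForm_apply_lie_apply ℝ g g x1 y2 z0,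
      traceForm_apply_lie_apply' ℝ g g y1 x2 z0,
      traceForm_apply_lie_apply ℝ g g x0 y2 z1,
      traceForm_apply_lie_apply' ℝ g g y0 x2 z1,
      traceForm_apply_lie_apply ℝ g g x0 y1 z2,
      traceForm_apply_lie_apply' ℝ g g y0 x1 z2,
      traceForm_apply_lie_apply' ℝ g g z1 x2 y0,
      traceForm_apply_lie_apply' ℝ g g z2 x1 y0,
      traceForm_apply_lie_apply' ℝ g g z2 x0 y1,
      traceForm_apply_lie_apply' ℝ g g z0 x2 y1,
      traceForm_apply_lie_apply' ℝ g g z0 x1 y2,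
      traceForm_apply_lie_apply' ℝ g g z1 x0 y2]
  simp only [map_neg, LinearMap.neg_apply,
      show ∀ u v : g, (traceForm ℝ g g) u ⁅z1, v⁆ = -((traceForm ℝ g g) u ⁅v, z1⁆) from
        fun u v => by rw [show ⁅z1, v⁆ = -⁅v, z1⁆ by rw [lie_skew], map_neg],
      show ∀ u v : g, (traceForm ℝ g g) u ⁅z0, v⁆ = -((traceForm ℝ g g) u ⁅v, z0⁆) from
        fun u v => by rw [show ⁅z0, v⁆ = -⁅v, z0⁆ by rw [lie_skew], map_neg],
      show ∀ u v : g, (traceForm ℝ g g) u ⁅z2, v⁆ = -((traceForm ℝ g g) u ⁅v, z2⁆) from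
        fun u v => by rw [show ⁅z2, v⁆ = -⁅v, z2⁆ by rw [lie_skew], map_neg]]
  field_simp
  ring

end Aux

namespace ThreeModuleSetting

variable {g : Type*} [LieRing g] [LieAlgebra ℝ g] [FiniteDimensional ℝ g]
  (S : ThreeModuleSetting g)

private lemma exists_decomp {X : g} (hX : X ∈ S.msum) :
    ∃ x0 ∈ S.m 0, ∃ x1 ∈ S.m 1, ∃ x2 ∈ S.m 2, X = x0 + x1 + x2 := by
  obtain ⟨w, hw, x2, hx2, rfl⟩ := Submodule.mem_sup.mp hX
  obtain ⟨x0, hx0, x1, hx1, rfl⟩ := Submodule.mem_sup.mp hw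
  exact ⟨x0, hx0, x1, hx1, x2, hx2, rfl⟩

private lemma proj_add {x0 x1 x2 : g} (h0 : x0 ∈ S.m 0) (h1 : x1 ∈ S.m 1)
    (h2 : x2 ∈ S.m 2) :
    S.p 0 (x0 + x1 + x2) = x0 ∧ S.p 1 (x0 + x1 + x2) = x1 ∧
      S.p 2 (x0 + x1 + x2) = x2 := by
  have h := S.proj_spec 0 (S.hsub.zero_mem) x0 h0 x1 h1 x2 h2
  rw [zero_add] at h
  exact ⟨h.2.1, h.2.2.1, h.2.2.2⟩

private lemma lie01 {x y : g} (hx : x ∈ S.m 0) (hy : y ∈ S.m 1) : ⁅x, y⁆ ∈ S.m 2 := by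
  have h := S.bracket_cyc 0 x hx y (by rw [show ((0 : Fin 3) + 1) = 1 from by decide]; exact hy)
  rwa [show ((0 : Fin 3) + 2) = 2 from by decide] at h

private lemma lie12 {x y : g} (hx : x ∈ S.m 1) (hy : y ∈ S.m 2) : ⁅x, y⁆ ∈ S.m 0 := by
  have h := S.bracket_cyc 1 x hx y (by rw [show ((1 : Fin 3) + 1) = 2 from by decide]; exact hy)
  rwa [show ((1 : Fin 3) + 2) = 0 from by decide] at h

private lemma lie20 {x y : g} (hx : x ∈ S.m 2) (hy : y ∈ S.m 0) : ⁅x, y⁆ ∈ S.m 1 := by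
  have h := S.bracket_cyc 2 x hx y (by rw [show ((2 : Fin 3) + 1) = 0 from by decide]; exact hy)
  rwa [show ((2 : Fin 3) + 2) = 1 from by decide] at h

private lemma lie10 {x y : g} (hx : x ∈ S.m 1) (hy : y ∈ S.m 0) : ⁅x, y⁆ ∈ S.m 2 := by
  rw [← lie_skew]; exact neg_mem (S.lie01 hy hx)

private lemma lie21 {x y : g} (hx : x ∈ S.m 2) (hy : y ∈ S.m 1) : ⁅x, y⁆ ∈ S.m 0 := by
  rw [← lie_skew]; exact neg_mem (S.lie12 hy hx)

private lemma lie02 {x y : g} (hx : x ∈ S.m 0) (hy : y ∈ S.m 2) : ⁅x, y⁆ ∈ S.m 1 := by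
  rw [← lie_skew]; exact neg_mem (S.lie20 hy hx)

/-- Components of the projection to `m` of a bracket `⁅Z, Y⁆` of elements given in
decomposed form. -/
private lemma projm_bracket {y0 y1 y2 z0 z1 z2 : g}
    (hy0 : y0 ∈ S.m 0) (hy1 : y1 ∈ S.m 1) (hy2 : y2 ∈ S.m 2)
    (hz0 : z0 ∈ S.m 0) (hz1 : z1 ∈ S.m 1) (hz2 : z2 ∈ S.m 2) :
    S.p 0 ⁅z0 + z1 + z2, y0 + y1 + y2⁆ = ⁅z1, y2⁆ + ⁅z2, y1⁆ ∧
    S.p 1 ⁅z0 + z1 + z2, y0 + y1 + y2⁆ = ⁅z2, y0⁆ + ⁅z0, y2⁆ ∧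
    S.p 2 ⁅z0 + z1 + z2, y0 + y1 + y2⁆ = ⁅z0, y1⁆ + ⁅z1, y0⁆ := by
  have hzy : ⁅z0 + z1 + z2, y0 + y1 + y2⁆ =
      (⁅z0, y0⁆ + ⁅z1, y1⁆ + ⁅z2, y2⁆) + (⁅z1, y2⁆ + ⁅z2, y1⁆) +
      (⁅z2, y0⁆ + ⁅z0, y2⁆) + (⁅z0, y1⁆ + ⁅z1, y0⁆) := by
    simp only [add_lie, lie_add]; abel
  have hH : ⁅z0, y0⁆ + ⁅z1, y1⁆ + ⁅z2, y2⁆ ∈ S.hsub :=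
    add_mem (add_mem (S.bracket_h 0 z0 hz0 y0 hy0) (S.bracket_h 1 z1 hz1 y1 hy1))
      (S.bracket_h 2 z2 hz2 y2 hy2)
  have h := S.proj_spec _ hH _ (add_mem (S.lie12 hz1 hy2) (S.lie21 hz2 hy1))
    _ (add_mem (S.lie20 hz2 hy0) (S.lie02 hz0 hy2))
    _ (add_mem (S.lie01 hz0 hy1) (S.lie10 hz1 hy0))
  rw [hzy]
  exact ⟨h.2.1, h.2.2.1, h.2.2.2⟩

end ThreeModuleSetting

/-- for all `X, Y, Z ∈ m`,
`2 g_a(U(X,Y), Z) = g_a(X, [Z,Y]_m) + g_a([Z,X]_m, Y)`. -/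
theorem statement1 {g : Type*} [LieRing g] [LieAlgebra ℝ g] [FiniteDimensional ℝ g]
    (S : ThreeModuleSetting g) (a : Fin 3 → ℝ) (ha : ∀ i, 0 < a i) :
    ∀ X ∈ S.msum, ∀ Y ∈ S.msum, ∀ Z ∈ S.msum,
      2 * S.ga a (S.U a X Y) Z = S.ga a X (S.projm ⁅Z, Y⁆) + S.ga a (S.projm ⁅Z, X⁆) Y := by
  intro X hX Y hY Z hZ
  obtain ⟨x0, hx0, x1, hx1, x2, hx2, rfl⟩ := S.exists_decomp hX
  obtain ⟨y0, hy0, y1, hy1, y2, hy2, rfl⟩ := S.exists_decomp hY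
  obtain ⟨z0, hz0, z1, hz1, z2, hz2, rfl⟩ := S.exists_decomp hZ
  obtain ⟨pX0, pX1, pX2⟩ := S.proj_add hx0 hx1 hx2
  obtain ⟨pY0, pY1, pY2⟩ := S.proj_add hy0 hy1 hy2
  obtain ⟨pZ0, pZ1, pZ2⟩ := S.proj_add hz0 hz1 hz2
  -- components of U
  have hU : S.U a (x0 + x1 + x2) (y0 + y1 + y2) =
      ((a 2 - a 1) / (2 * a 0)) • (⁅x1, y2⁆ + ⁅y1, x2⁆) +
      ((a 2 - a 0) / (2 * a 1)) • (⁅x0, y2⁆ + ⁅y0, x2⁆) +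
      ((a 1 - a 0) / (2 * a 2)) • (⁅x0, y1⁆ + ⁅y0, x1⁆) := by
    rw [ThreeModuleSetting.U, pX0, pX1, pX2, pY0, pY1, pY2]
  obtain ⟨pU0, pU1, pU2⟩ := S.proj_add
    (Submodule.smul_mem _ _ (add_mem (S.lie12 hx1 hy2) (S.lie12 hy1 hx2)))
    (Submodule.smul_mem _ _ (add_mem (S.lie02 hx0 hy2) (S.lie02 hy0 hx2)))
    (Submodule.smul_mem _ _ (add_mem (S.lie01 hx0 hy1) (S.lie01 hy0 hx1)))
  rw [← hU] at pU0 pU1 pU2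
  -- components of projm ⁅Z, Y⁆
  obtain ⟨pZY0, pZY1, pZY2⟩ := S.projm_bracket hy0 hy1 hy2 hz0 hz1 hz2
  have hprojZY : S.projm ⁅z0 + z1 + z2, y0 + y1 + y2⁆ =
      (⁅z1, y2⁆ + ⁅z2, y1⁆) + (⁅z2, y0⁆ + ⁅z0, y2⁆) + (⁅z0, y1⁆ + ⁅z1, y0⁆) := by
    rw [ThreeModuleSetting.projm, pZY0, pZY1, pZY2]
  obtain ⟨pW0, pW1, pW2⟩ := S.proj_add
    (add_mem (S.lie12 hz1 hy2) (S.lie21 hz2 hy1))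
    (add_mem (S.lie20 hz2 hy0) (S.lie02 hz0 hy2))
    (add_mem (S.lie01 hz0 hy1) (S.lie10 hz1 hy0))
  rw [← hprojZY] at pW0 pW1 pW2
  -- components of projm ⁅Z, X⁆
  obtain ⟨pZX0, pZX1, pZX2⟩ := S.projm_bracket hx0 hx1 hx2 hz0 hz1 hz2
  have hprojZX : S.projm ⁅z0 + z1 + z2, x0 + x1 + x2⁆ =
      (⁅z1, x2⁆ + ⁅z2, x1⁆) + (⁅z2, x0⁆ + ⁅z0, x2⁆) + (⁅z0, x1⁆ + ⁅z1, x0⁆) := by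
    rw [ThreeModuleSetting.projm, pZX0, pZX1, pZX2]
  obtain ⟨pV0, pV1, pV2⟩ := S.proj_add
    (add_mem (S.lie12 hz1 hx2) (S.lie21 hz2 hx1))
    (add_mem (S.lie20 hz2 hx0) (S.lie02 hz0 hx2))
    (add_mem (S.lie01 hz0 hx1) (S.lie10 hz1 hx0))
  rw [← hprojZX] at pV0 pV1 pV2
  simp only [ThreeModuleSetting.ga, pU0, pU1, pU2, pZ0, pZ1, pZ2, pX0, pX1, pX2,
    pY0, pY1, pY2, pW0, pW1, pW2, pV0, pV1, pV2]
  exact main_identity (a 0) (a 1) (a 2) (ha 0).ne' (ha 1).ne' (ha 2).ne'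
    x0 x1 x2 y0 y1 y2 z0 z1 z2
end

section
/- Let {i,j,k} = {1,2,3} and let f : m → m be a linear map with f(mᵢ) ⊆ mᵢ, f ∘ f = −id on mᵢ, and f = 0 on mⱼ ⊕ m_k (an invariant f-structure whose image is the single module mᵢ). Then for every choice of positive reals a₁, a₂, a₃ there exists X ∈ m such that (1/2)[X, fX]_m + U(X, fX) − f(U(X, X)) ≠ 0; that is, the pair (f, g_a) never satisfies the Killing f-structure condition. -/
open LieAlgebra

namespace ThreeModuleSetting

variable {g : Type*} [LieRing g] [LieAlgebra ℝ g] [FiniteDimensional ℝ g]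
  (S : ThreeModuleSetting g)

lemma p_of_mem {r : Fin 3} {W : g} (hW : W ∈ S.m r) (s : Fin 3) :
    S.p s W = if s = r then W else 0 := by
  fin_cases r
  · have h := S.proj_spec 0 S.hsub.zero_mem W hW 0 (S.m 1).zero_mem 0 (S.m 2).zero_mem
    simp only [zero_add, add_zero] at h
    fin_cases s <;> simp_all
  · have h := S.proj_spec 0 S.hsub.zero_mem 0 (S.m 0).zero_mem W hW 0 (S.m 2).zero_mem
    simp only [zero_add, add_zero] at h
    fin_cases s <;> simp_all
  · have h := S.proj_spec 0 S.hsub.zero_mem 0 (S.m 0).zero_mem 0 (S.m 1).zero_mem W hW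
    simp only [zero_add, add_zero] at h
    fin_cases s <;> simp_all

lemma p_of_mem_h {H : g} (hH : H ∈ S.hsub) (s : Fin 3) : S.p s H = 0 := by
  have h := S.proj_spec H hH 0 (S.m 0).zero_mem 0 (S.m 1).zero_mem 0 (S.m 2).zero_mem
  simp only [add_zero] at h
  fin_cases s <;> simp_all

lemma projm_of {H K : g} (hH : H ∈ S.hsub) {r : Fin 3} (hK : K ∈ S.m r) :
    S.projm (H + K) = K := by
  unfold projm
  simp only [map_add, S.p_of_mem_h hH, S.p_of_mem hK, zero_add]
  fin_cases r <;> simp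

lemma mem_msum {t : Fin 3} {X : g} (h : X ∈ S.m t) : X ∈ S.msum := by
  unfold msum
  fin_cases t
  · exact Submodule.mem_sup_left (Submodule.mem_sup_left h)
  · exact Submodule.mem_sup_left (Submodule.mem_sup_right h)
  · exact Submodule.mem_sup_right h

lemma bracket_mem {p q r : Fin 3} (hpq : p ≠ q) (hpr : p ≠ r) (hqr : q ≠ r)
    {X Y : g} (hX : X ∈ S.m p) (hY : Y ∈ S.m q) : ⁅X, Y⁆ ∈ S.m r := by
  fin_cases p <;> fin_cases q <;> fin_cases r <;>
    first
      | exact absurd rfl hpq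
      | exact absurd rfl hpr
      | exact absurd rfl hqr
      | exact S.bracket_cyc _ X hX Y hY
      | · rw [← lie_skew]
          exact (S.m _).neg_mem (S.bracket_cyc _ Y hY X hX)

lemma bracket_ne' {p q : Fin 3} (hpq : p ≠ q) :
    ∃ X ∈ S.m p, ∃ Y ∈ S.m q, ⁅X, Y⁆ ≠ 0 := by
  fin_cases p <;> fin_cases q <;>
    first
      | exact absurd rfl hpq
      | exact S.bracket_ne _
      | · obtain ⟨X, hX, Y, hY, hne⟩ := S.bracket_ne _
          exact ⟨Y, hY, X, hX, fun h => hne (by rw [← lie_skew, h, neg_zero])⟩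

lemma U_eval (a : Fin 3 → ℝ) {i j k : Fin 3} (hij : i ≠ j) (hjk : j ≠ k) (hik : i ≠ k)
    {W Y V Z : g} (hW : W ∈ S.m i) (hY : Y ∈ S.m j) (hV : V ∈ S.m i) (hZ : Z ∈ S.m j) :
    S.U a (W + Y) (V + Z) = ((a i - a j) / (2 * a k)) • (⁅Y, V⁆ - ⁅W, Z⁆) := by
  unfold U
  simp only [map_add, S.p_of_mem hW, S.p_of_mem hY, S.p_of_mem hV, S.p_of_mem hZ]
  fin_cases i <;> fin_cases j <;> fin_cases k <;>
    first
      | exact absurd rfl hij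
      | exact absurd rfl hjk
      | exact absurd rfl hik
      | · simp only [Fin.isValue, show ((1:Fin 3) : Fin 3) = ⟨1, by omega⟩ from rfl]
          simp
          first
            | · rw [show ⁅V, Y⁆ = -⁅Y, V⁆ from (lie_skew V Y).symm]
                module
            | · rw [show ⁅Z, W⁆ = -⁅W, Z⁆ from (lie_skew Z W).symm]
                module

lemma master {i j k : Fin 3} (hij : i ≠ j) (hjk : j ≠ k) (hik : i ≠ k)
    (f : g →ₗ[ℝ] g)
    (hf_inv : ∀ X ∈ S.m i, f X ∈ S.m i)
    (hf_sq : ∀ X ∈ S.m i, f (f X) = -X)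
    (hf_zero : ∀ X ∈ S.m j ⊔ S.m k, f X = 0)
    (a : Fin 3 → ℝ) (ha : ∀ t, 0 < a t) (hc : a k + a i - a j ≠ 0) :
    ∃ X ∈ S.msum,
      (1 / 2 : ℝ) • S.projm ⁅X, f X⁆ + S.U a X (f X) - f (S.U a X X) ≠ 0 := by
  obtain ⟨Y, hY, V, hV, hne⟩ := S.bracket_ne' (Ne.symm hij)
  set W : g := -f V with hWdef
  have hW : W ∈ S.m i := (S.m i).neg_mem (hf_inv V hV)
  have hfW : f W = V := by rw [hWdef, map_neg, hf_sq V hV, neg_neg]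
  have hfY : f Y = 0 := hf_zero Y (Submodule.mem_sup_left hY)
  have hfX : f (W + Y) = V := by rw [map_add, hfW, hfY, add_zero]
  refine ⟨W + Y, (S.msum).add_mem (S.mem_msum hW) (S.mem_msum hY), ?_⟩
  rw [hfX]
  have hYV : ⁅Y, V⁆ ∈ S.m k := S.bracket_mem (Ne.symm hij) hjk hik hY hV
  have h1 : S.projm ⁅W + Y, V⁆ = ⁅Y, V⁆ := by
    rw [add_lie]
    exact S.projm_of (S.bracket_h i W hW V hV) hYV
  have h2 : S.U a (W + Y) V = ((a i - a j) / (2 * a k)) • ⁅Y, V⁆ := by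
    have := S.U_eval a hij hjk hik hW hY hV ((S.m j).zero_mem)
    simpa using this
  have h3 : f (S.U a (W + Y) (W + Y)) = 0 := by
    rw [S.U_eval a hij hjk hik hW hY hW hY, map_smul]
    rw [hf_zero _ (Submodule.mem_sup_right
      ((S.m k).sub_mem (S.bracket_mem (Ne.symm hij) hjk hik hY hW)
        (S.bracket_mem hij hik hjk hW hY)))]
    rw [smul_zero]
  rw [h1, h2, h3, sub_zero, ← add_smul]
  have hak : (0:ℝ) < a k := ha k
  have hco : (1 / 2 : ℝ) + (a i - a j) / (2 * a k) = (a k + a i - a j) / (2 * a k) := by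
    field_simp
    ring
  rw [hco]
  exact smul_ne_zero (div_ne_zero hc (by positivity)) hne

end ThreeModuleSetting

/-- if `f` is an invariant `f`-structure with image the single module `mᵢ`
(i.e. `f(mᵢ) ⊆ mᵢ`, `f² = -id` on `mᵢ`, `f = 0` on `mⱼ ⊕ m_k`), then for every choice of
positive characteristic numbers there is `X ∈ m` where the Killing `f`-structure condition
`(1/2)[X, fX]_m + U(X, fX) − f(U(X, X)) = 0` fails. -/
theorem statement2 {g : Type*} [LieRing g] [LieAlgebra ℝ g] [FiniteDimensional ℝ g]
    (S : ThreeModuleSetting g) (i j k : Fin 3) (hij : i ≠ j) (hjk : j ≠ k) (hik : i ≠ k)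
    (f : g →ₗ[ℝ] g)
    (hf_inv : ∀ X ∈ S.m i, f X ∈ S.m i)
    (hf_sq : ∀ X ∈ S.m i, f (f X) = -X)
    (hf_zero : ∀ X ∈ S.m j ⊔ S.m k, f X = 0)
    (a : Fin 3 → ℝ) (ha : ∀ t, 0 < a t) :
    ∃ X ∈ S.msum,
      (1 / 2 : ℝ) • S.projm ⁅X, f X⁆ + S.U a X (f X) - f (S.U a X X) ≠ 0 := by
  by_cases hc : a k + a i - a j ≠ 0
  · exact S.master hij hjk hik f hf_inv hf_sq hf_zero a ha hc
  · push_neg at hc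
    have hc2 : a j + a i - a k ≠ 0 := by
      have := ha i
      intro h; linarith
    exact S.master hik (Ne.symm hjk) hij f hf_inv hf_sq
      (fun X hX => hf_zero X (by rwa [sup_comm] at hX)) a ha hc2
end

section
/- Let {i,j,k} = {1,2,3} and let f : m → m be a linear map with f(mᵢ) ⊆ mᵢ, f ∘ f = −id on mᵢ, and f = 0 on mⱼ ⊕ m_k. Then for every choice of positive reals a₁, a₂, a₃ and every X ∈ m one has (1/2)[fX, f²X]_m + U(fX, f²X) − f(U(fX, fX)) = 0 (the nearly Kähler f-structure condition), and consequently also f(2U(fX, f²X) − f(U(fX, fX)) + f(U(f²X, f²X))) = 0 (the G₁f condition). -/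
open LieAlgebra

lemma ThreeModuleSetting.proj_eq {g : Type*} [LieRing g] [LieAlgebra ℝ g]
    [FiniteDimensional ℝ g] (S : ThreeModuleSetting g) (i : Fin 3) (Y : g)
    (hY : Y ∈ S.m i) : S.p i Y = Y ∧ ∀ t, t ≠ i → S.p t Y = 0 := by
  fin_cases i
  · obtain ⟨h1, h2, h3, h4⟩ := S.proj_spec 0 (zero_mem _) Y hY 0 (zero_mem _) 0 (zero_mem _)
    simp only [zero_add, add_zero] at h1 h2 h3 h4
    exact ⟨h2, by intro t ht; fin_cases t <;> simp_all⟩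
  · obtain ⟨h1, h2, h3, h4⟩ := S.proj_spec 0 (zero_mem _) 0 (zero_mem _) Y hY 0 (zero_mem _)
    simp only [zero_add, add_zero] at h1 h2 h3 h4
    exact ⟨h3, by intro t ht; fin_cases t <;> simp_all⟩
  · obtain ⟨h1, h2, h3, h4⟩ := S.proj_spec 0 (zero_mem _) 0 (zero_mem _) 0 (zero_mem _) Y hY
    simp only [zero_add, add_zero] at h1 h2 h3 h4
    exact ⟨h4, by intro t ht; fin_cases t <;> simp_all⟩

lemma ThreeModuleSetting.proj_h_zero {g : Type*} [LieRing g] [LieAlgebra ℝ g]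
    [FiniteDimensional ℝ g] (S : ThreeModuleSetting g) (Z : g)
    (hZ : Z ∈ S.hsub) : ∀ t, S.p t Z = 0 := by
  obtain ⟨h1, h2, h3, h4⟩ := S.proj_spec Z hZ 0 (zero_mem _) 0 (zero_mem _) 0 (zero_mem _)
  simp only [add_zero] at h1 h2 h3 h4
  intro t; fin_cases t <;> assumption

lemma ThreeModuleSetting.U_zero_of_single {g : Type*} [LieRing g] [LieAlgebra ℝ g]
    [FiniteDimensional ℝ g] (S : ThreeModuleSetting g) (i : Fin 3) (a : Fin 3 → ℝ)
    (Z W : g) (hZ : Z ∈ S.m i) (hW : W ∈ S.m i) : S.U a Z W = 0 := by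
  obtain ⟨-, hZ0⟩ := S.proj_eq i Z hZ
  obtain ⟨-, hW0⟩ := S.proj_eq i W hW
  have pair : ∀ s t : Fin 3, s ≠ t → ∀ A B : g, (∀ u, u ≠ i → S.p u A = 0) →
      (∀ u, u ≠ i → S.p u B = 0) → ⁅S.p s A, S.p t B⁆ = 0 := by
    intro s t hst A B hA hB
    by_cases h : s = i
    · rw [hB t (by rw [← h]; exact hst.symm)]; simp
    · rw [hA s h]; simp
  unfold ThreeModuleSetting.U
  rw [pair 1 2 (by decide) _ _ hZ0 hW0, pair 1 2 (by decide) _ _ hW0 hZ0,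
      pair 0 2 (by decide) _ _ hZ0 hW0, pair 0 2 (by decide) _ _ hW0 hZ0,
      pair 0 1 (by decide) _ _ hZ0 hW0, pair 0 1 (by decide) _ _ hW0 hZ0]
  simp

/-- if `f` is an invariant `f`-structure with image the single module `mᵢ`
(i.e. `f(mᵢ) ⊆ mᵢ`, `f² = -id` on `mᵢ`, `f = 0` on `mⱼ ⊕ m_k`), then for every choice of
positive characteristic numbers and every `X ∈ m` the nearly Kähler `f`-structure condition
`(1/2)[fX, f²X]_m + U(fX, f²X) − f(U(fX, fX)) = 0` holds, and consequently also the `G₁f`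
condition `f(2U(fX, f²X) − f(U(fX, fX)) + f(U(f²X, f²X))) = 0` holds. -/
theorem statement3 {g : Type*} [LieRing g] [LieAlgebra ℝ g] [FiniteDimensional ℝ g]
    (S : ThreeModuleSetting g) (i j k : Fin 3) (hij : i ≠ j) (hjk : j ≠ k) (hik : i ≠ k)
    (f : g →ₗ[ℝ] g)
    (hf_inv : ∀ X ∈ S.m i, f X ∈ S.m i)
    (hf_sq : ∀ X ∈ S.m i, f (f X) = -X)
    (hf_zero : ∀ X ∈ S.m j ⊔ S.m k, f X = 0)
    (a : Fin 3 → ℝ) (ha : ∀ t, 0 < a t) :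
    ∀ X ∈ S.msum,
      (1 / 2 : ℝ) • S.projm ⁅f X, f (f X)⁆ + S.U a (f X) (f (f X)) - f (S.U a (f X) (f X)) = 0
      ∧ f ((2 : ℝ) • S.U a (f X) (f (f X)) - f (S.U a (f X) (f X))
            + f (S.U a (f (f X)) (f (f X)))) = 0 := by
  intro X hX
  have tri : ∀ t : Fin 3, t ≠ i → t = j ∨ t = k := by
    have : ∀ i j k t : Fin 3, i ≠ j → j ≠ k → i ≠ k → t ≠ i → t = j ∨ t = k := by decide
    intro t ht; exact this i j k t hij hjk hik ht
  have hf_all : ∀ (t : Fin 3) (Y : g), Y ∈ S.m t → f Y ∈ S.m i := by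
    intro t Y hY
    by_cases h : t = i
    · exact hf_inv Y (h ▸ hY)
    · rcases tri t h with rfl | rfl
      · rw [hf_zero Y (Submodule.mem_sup_left hY)]; exact zero_mem _
      · rw [hf_zero Y (Submodule.mem_sup_right hY)]; exact zero_mem _
  have hZ : f X ∈ S.m i := by
    rcases Submodule.mem_sup.mp hX with ⟨Y01, h01, Y2, h2, rfl⟩
    rcases Submodule.mem_sup.mp h01 with ⟨Y0, h0, Y1, h1, rfl⟩
    rw [map_add, map_add]
    exact add_mem (add_mem (hf_all 0 _ h0) (hf_all 1 _ h1)) (hf_all 2 _ h2)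
  have hW : f (f X) ∈ S.m i := hf_inv _ hZ
  have hU1 : S.U a (f X) (f (f X)) = 0 := S.U_zero_of_single i a _ _ hZ hW
  have hU2 : S.U a (f X) (f X) = 0 := S.U_zero_of_single i a _ _ hZ hZ
  have hU3 : S.U a (f (f X)) (f (f X)) = 0 := S.U_zero_of_single i a _ _ hW hW
  have hpr : S.projm ⁅f X, f (f X)⁆ = 0 := by
    have hbr : ⁅f X, f (f X)⁆ ∈ S.hsub := S.bracket_h i _ hZ _ hW
    unfold ThreeModuleSetting.projm
    rw [S.proj_h_zero _ hbr 0, S.proj_h_zero _ hbr 1, S.proj_h_zero _ hbr 2]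
    simp
  refine ⟨?_, ?_⟩
  · rw [hpr, hU1, hU2]; simp
  · rw [hU1, hU2, hU3]; simp
end

section
/- Let {i,j,k} = {1,2,3} and let f : m → m be a linear map with f = 0 on mᵢ, f(mⱼ ⊕ m_k) ⊆ mⱼ ⊕ m_k, and f ∘ f = −id on mⱼ ⊕ m_k (an invariant f-structure whose kernel is the single module mᵢ). Then for every choice of positive reals a₁, a₂, a₃ and every X ∈ m one has f(2U(fX, f²X) − f(U(fX, fX)) + f(U(f²X, f²X))) = 0; that is, (f, g_a) always satisfies the G₁f condition. -/
/-!
Every summand of `U` is a bracket of components from two *different* modules. For `Y, Z`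
in `mⱼ ⊕ mₖ` the only such brackets that survive are `[mⱼ, mₖ] ⊆ mᵢ`, so `U(Y, Z)` lies in
`mᵢ`, where `f` vanishes. Since `f` maps `m` into `mⱼ ⊕ mₖ`, both `fX` and `f²X` lie
there, and all three terms of the `G₁f` expression are killed by `f`.
-/

open LieAlgebra

lemma Fin.three_cases_of_pairwise_ne {s t u : Fin 3} (hst : s ≠ t) (hus : u ≠ s) (hut : u ≠ t) :
    (t = s + 1 ∧ u = s + 2) ∨ (s = t + 1 ∧ u = t + 2) := by
  revert s t u; decide

namespace ThreeModuleSetting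

variable {g : Type*} [LieRing g] [LieAlgebra ℝ g] [FiniteDimensional ℝ g]
  (S : ThreeModuleSetting g)

lemma p_apply_eq_zero_of_mem {s t : Fin 3} (hst : s ≠ t) {W : g} (hW : W ∈ S.m t) :
    S.p s W = 0 := by
  have h0 : ∀ r : Fin 3, (0 : g) ∈ S.m r := fun r => zero_mem _
  fin_cases t
  · obtain ⟨-, h₀, h₁, h₂⟩ := S.proj_spec 0 (zero_mem _) W hW 0 (h0 1) 0 (h0 2)
    fin_cases s <;> simp_all
  · obtain ⟨-, h₀, h₁, h₂⟩ := S.proj_spec 0 (zero_mem _) 0 (h0 0) W hW 0 (h0 2)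
    fin_cases s <;> simp_all
  · obtain ⟨-, h₀, h₁, h₂⟩ := S.proj_spec 0 (zero_mem _) 0 (h0 0) 0 (h0 1) W hW
    fin_cases s <;> simp_all

lemma p_apply_eq_zero_of_mem_sup {i j k : Fin 3} (hij : i ≠ j) (hik : i ≠ k) {W : g}
    (hW : W ∈ S.m j ⊔ S.m k) : S.p i W = 0 := by
  obtain ⟨y, hy, z, hz, rfl⟩ := Submodule.mem_sup.mp hW
  rw [map_add, S.p_apply_eq_zero_of_mem hij hy, S.p_apply_eq_zero_of_mem hik hz, add_zero]

lemma lie_mem_of_pairwise_ne {s t u : Fin 3} (hst : s ≠ t) (hus : u ≠ s) (hut : u ≠ t)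
    {X Y : g} (hX : X ∈ S.m s) (hY : Y ∈ S.m t) : ⁅X, Y⁆ ∈ S.m u := by
  rcases Fin.three_cases_of_pairwise_ne hst hus hut with ⟨rfl, rfl⟩ | ⟨rfl, rfl⟩
  · exact S.bracket_cyc s X hX Y hY
  · rw [← lie_skew]
    exact neg_mem (S.bracket_cyc t Y hY X hX)

lemma lie_p_mem_of_mem_sup {i j k : Fin 3} (hij : i ≠ j) (hik : i ≠ k) {s t : Fin 3}
    (hst : s ≠ t) {Y Z : g} (hY : Y ∈ S.m j ⊔ S.m k) (hZ : Z ∈ S.m j ⊔ S.m k) : ⁅S.p s Y, S.p t Z⁆ ∈ S.m i := by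
  by_cases hsi : s = i
  · rw [hsi, S.p_apply_eq_zero_of_mem_sup hij hik hY, zero_lie]
    exact zero_mem _
  by_cases hti : t = i
  · rw [hti, S.p_apply_eq_zero_of_mem_sup hij hik hZ, lie_zero]
    exact zero_mem _
  exact S.lie_mem_of_pairwise_ne hst (Ne.symm hsi) (Ne.symm hti) (S.p_mem s Y) (S.p_mem t Z)

lemma U_mem_of_mem_sup {i j k : Fin 3} (hij : i ≠ j) (hik : i ≠ k) (a : Fin 3 → ℝ) {Y Z : g}
    (hY : Y ∈ S.m j ⊔ S.m k) (hZ : Z ∈ S.m j ⊔ S.m k) : S.U a Y Z ∈ S.m i := by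
  unfold U
  refine add_mem (add_mem ?_ ?_) ?_ <;> refine Submodule.smul_mem _ _ (add_mem ?_ ?_) <;>
    exact S.lie_p_mem_of_mem_sup hij hik (by decide) ‹_› ‹_›

lemma map_mem_sup_of_mem_msum {i j k : Fin 3} (hij : i ≠ j) (hjk : j ≠ k) (hik : i ≠ k)
    {f : g →ₗ[ℝ] g} (hf_zero : ∀ X ∈ S.m i, f X = 0)
    (hf_inv : ∀ X ∈ S.m j ⊔ S.m k, f X ∈ S.m j ⊔ S.m k) {X : g} (hX : X ∈ S.msum) :
    f X ∈ S.m j ⊔ S.m k := by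
  have hmod (t : Fin 3) {W : g} (hW : W ∈ S.m t) : f W ∈ S.m j ⊔ S.m k := by
    obtain rfl | rfl | rfl : t = i ∨ t = j ∨ t = k := by omega
    · rw [hf_zero W hW]
      exact zero_mem _
    · exact hf_inv W (Submodule.mem_sup_left hW)
    · exact hf_inv W (Submodule.mem_sup_right hW)
  obtain ⟨w, hw, x₂, hx₂, rfl⟩ := Submodule.mem_sup.mp hX
  obtain ⟨x₀, hx₀, x₁, hx₁, rfl⟩ := Submodule.mem_sup.mp hw
  simp only [map_add]
  exact add_mem (add_mem (hmod 0 hx₀) (hmod 1 hx₁)) (hmod 2 hx₂)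

end ThreeModuleSetting

theorem statement4_general {g : Type*} [LieRing g] [LieAlgebra ℝ g] [FiniteDimensional ℝ g]
    (S : ThreeModuleSetting g) (i j k : Fin 3) (hij : i ≠ j) (hjk : j ≠ k) (hik : i ≠ k)
    (f : g →ₗ[ℝ] g)
    (hf_zero : ∀ X ∈ S.m i, f X = 0)
    (hf_inv : ∀ X ∈ S.m j ⊔ S.m k, f X ∈ S.m j ⊔ S.m k)
    (a : Fin 3 → ℝ) :
    ∀ X ∈ S.msum,
      f ((2 : ℝ) • S.U a (f X) (f (f X)) - f (S.U a (f X) (f X))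
          + f (S.U a (f (f X)) (f (f X)))) = 0 := by
  intro X hX
  have hfX := S.map_mem_sup_of_mem_msum hij hjk hik hf_zero hf_inv hX
  have hffX := hf_inv _ hfX
  have hU {Y Z : g} (hY : Y ∈ S.m j ⊔ S.m k) (hZ : Z ∈ S.m j ⊔ S.m k) : f (S.U a Y Z) = 0 :=
    hf_zero _ (S.U_mem_of_mem_sup hij hik a hY hZ)
  rw [hU hfX hfX, hU hffX hffX, sub_zero, add_zero, map_smul, hU hfX hffX, smul_zero]

/-- if `f` is an invariant `f`-structure with kernel the single module `mᵢ`
(i.e. `f = 0` on `mᵢ`, `f(mⱼ ⊕ m_k) ⊆ mⱼ ⊕ m_k`, `f² = -id` on `mⱼ ⊕ m_k`), then for every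
choice of positive characteristic numbers and every `X ∈ m` the `G₁f` condition
`f(2U(fX, f²X) − f(U(fX, fX)) + f(U(f²X, f²X))) = 0` holds. -/
theorem statement4 {g : Type*} [LieRing g] [LieAlgebra ℝ g] [FiniteDimensional ℝ g]
    (S : ThreeModuleSetting g) (i j k : Fin 3) (hij : i ≠ j) (hjk : j ≠ k) (hik : i ≠ k)
    (f : g →ₗ[ℝ] g)
    (hf_zero : ∀ X ∈ S.m i, f X = 0)
    (hf_inv : ∀ X ∈ S.m j ⊔ S.m k, f X ∈ S.m j ⊔ S.m k)
    (hf_sq : ∀ X ∈ S.m j ⊔ S.m k, f (f X) = -X)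
    (a : Fin 3 → ℝ) (ha : ∀ t, 0 < a t) :
    ∀ X ∈ S.msum,
      f ((2 : ℝ) • S.U a (f X) (f (f X)) - f (S.U a (f X) (f X))
          + f (S.U a (f (f X)) (f (f X)))) = 0 :=
  statement4_general S i j k hij hjk hik f hf_zero hf_inv a
end

section
/- Let {i,j,k} = {1,2,3} and let f : m → m be a linear map with f = 0 on mᵢ, f(mⱼ ⊕ m_k) ⊆ mⱼ ⊕ m_k, and f ∘ f = −id on mⱼ ⊕ m_k. Assume the nondegeneracy condition that there exists X ∈ m with [(fX)ⱼ, (f²X)_k] ≠ 0. Then for positive reals a₁, a₂, a₃ the nearly Kähler f-condition '(1/2)[fX, f²X]_m + U(fX, f²X) − f(U(fX, fX)) = 0 for all X ∈ m' holds if and only if aⱼ = a_k and [fX, f²X]_m = 0 for all X ∈ m. -/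
open LieAlgebra

section Aux

lemma fin3_cover {i j k : Fin 3} : i ≠ j → j ≠ k → i ≠ k → ∀ t : Fin 3, t = i ∨ t = j ∨ t = k := by
  fin_cases i <;> fin_cases j <;> fin_cases k <;> decide

lemma fin3_cyc {i j k : Fin 3} : i ≠ j → j ≠ k → i ≠ k →
    (k = j + 1 ∧ i = j + 2) ∨ (j = k + 1 ∧ i = k + 2) := by
  fin_cases i <;> fin_cases j <;> fin_cases k <;> decide

lemma fin3_six {i j k : Fin 3} : i ≠ j → j ≠ k → i ≠ k →
    (i=0∧j=1∧k=2)∨(i=0∧j=2∧k=1)∨(i=1∧j=0∧k=2)∨(i=1∧j=2∧k=0)∨(i=2∧j=0∧k=1)∨(i=2∧j=1∧k=0) := by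
  fin_cases i <;> fin_cases j <;> fin_cases k <;> decide

variable {g : Type*} [LieRing g] [LieAlgebra ℝ g] [FiniteDimensional ℝ g]
  (S : ThreeModuleSetting g)

lemma aux_p_of_mem {t : Fin 3} {X : g} (hX : X ∈ S.m t) (s : Fin 3) :
    S.p s X = if s = t then X else 0 := by
  fin_cases t
  · have := S.proj_spec 0 (zero_mem _) X hX 0 (zero_mem _) 0 (zero_mem _)
    simp only [zero_add, add_zero] at this
    fin_cases s <;> simp [this.2.1, this.2.2.1, this.2.2.2]
  · have := S.proj_spec 0 (zero_mem _) 0 (zero_mem _) X hX 0 (zero_mem _)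
    simp only [zero_add, add_zero] at this
    fin_cases s <;> simp [this.2.1, this.2.2.1, this.2.2.2]
  · have := S.proj_spec 0 (zero_mem _) 0 (zero_mem _) 0 (zero_mem _) X hX
    simp only [zero_add, add_zero] at this
    fin_cases s <;> simp [this.2.1, this.2.2.1, this.2.2.2]

lemma aux_projm_add (X Y : g) : S.projm (X + Y) = S.projm X + S.projm Y := by
  simp only [ThreeModuleSetting.projm, map_add]; abel

lemma aux_projm_of_mem {t : Fin 3} {X : g} (hX : X ∈ S.m t) : S.projm X = X := by
  unfold ThreeModuleSetting.projm
  rw [aux_p_of_mem S hX, aux_p_of_mem S hX, aux_p_of_mem S hX]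
  fin_cases t <;> simp

lemma aux_projm_of_h {X : g} (hX : X ∈ S.hsub) : S.projm X = 0 := by
  have := S.proj_spec X hX 0 (zero_mem _) 0 (zero_mem _) 0 (zero_mem _)
  simp only [add_zero] at this
  simp [ThreeModuleSetting.projm, this.2.1, this.2.2.1, this.2.2.2]

lemma aux_bracket_mem {i j k : Fin 3} (hij : i ≠ j) (hjk : j ≠ k) (hik : i ≠ k)
    {X Y : g} (hX : X ∈ S.m j) (hY : Y ∈ S.m k) : ⁅X, Y⁆ ∈ S.m i := by
  rcases fin3_cyc hij hjk hik with ⟨hk, hi⟩ | ⟨hj, hi⟩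
  · subst hk; subst hi; exact S.bracket_cyc j X hX Y hY
  · subst hj; subst hi
    rw [← lie_skew]
    exact (S.m _).neg_mem (S.bracket_cyc k Y hY X hX)

lemma aux_decomp {i j k : Fin 3} (hij : i ≠ j) (hjk : j ≠ k) (hik : i ≠ k)
    {Y : g} (hY : Y ∈ S.m j ⊔ S.m k) :
    S.p j Y + S.p k Y = Y ∧ S.p i Y = 0 := by
  rcases Submodule.mem_sup.1 hY with ⟨u, hu, v, hv, rfl⟩
  constructor
  · rw [map_add, map_add, aux_p_of_mem S hu, aux_p_of_mem S hu, aux_p_of_mem S hv,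
      aux_p_of_mem S hv]
    simp [hjk, Ne.symm hjk]
  · rw [map_add, aux_p_of_mem S hu, aux_p_of_mem S hv]
    simp [hij, hik]

lemma aux_U_formula {i j k : Fin 3} (hij : i ≠ j) (hjk : j ≠ k) (hik : i ≠ k)
    (a : Fin 3 → ℝ) {Y Z : g} (hY : S.p i Y = 0) (hZ : S.p i Z = 0) :
    S.U a Y Z = ((a k - a j) / (2 * a i)) • (⁅S.p j Y, S.p k Z⁆ + ⁅S.p j Z, S.p k Y⁆) := by
  rcases fin3_six hij hjk hik with ⟨hi,hj,hk⟩|⟨hi,hj,hk⟩|⟨hi,hj,hk⟩|⟨hi,hj,hk⟩|⟨hi,hj,hk⟩|⟨hi,hj,hk⟩ <;>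
      subst hi <;> subst hj <;> subst hk <;>
      simp only [ThreeModuleSetting.U, hY, hZ, zero_lie, lie_zero, add_zero, zero_add,
        smul_zero]
  · rw [← lie_skew (S.p 1 Y) (S.p 2 Z), ← lie_skew (S.p 1 Z) (S.p 2 Y)]; module
  · rw [← lie_skew (S.p 0 Y) (S.p 2 Z), ← lie_skew (S.p 0 Z) (S.p 2 Y)]; module
  · rw [← lie_skew (S.p 0 Y) (S.p 1 Z), ← lie_skew (S.p 0 Z) (S.p 1 Y)]; module

lemma aux_m_le_msum (t : Fin 3) : S.m t ≤ S.msum := by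
  fin_cases t
  · exact le_sup_of_le_left le_sup_left
  · exact le_sup_of_le_left le_sup_right
  · exact le_sup_right

end Aux

/-- if `f` is an invariant `f`-structure with kernel the single module `mᵢ`
(i.e. `f = 0` on `mᵢ`, `f(mⱼ ⊕ m_k) ⊆ mⱼ ⊕ m_k`, `f² = -id` on `mⱼ ⊕ m_k`), and there is
`X ∈ m` with `[(fX)ⱼ, (f²X)_k] ≠ 0`, then for positive characteristic numbers the nearly
Kähler `f`-condition `(1/2)[fX, f²X]_m + U(fX, f²X) − f(U(fX, fX)) = 0` for all `X ∈ m`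
holds if and only if `aⱼ = a_k` and `[fX, f²X]_m = 0` for all `X ∈ m`. -/
theorem statement5 {g : Type*} [LieRing g] [LieAlgebra ℝ g] [FiniteDimensional ℝ g]
    (S : ThreeModuleSetting g) (i j k : Fin 3) (hij : i ≠ j) (hjk : j ≠ k) (hik : i ≠ k)
    (f : g →ₗ[ℝ] g)
    (hf_zero : ∀ X ∈ S.m i, f X = 0)
    (hf_inv : ∀ X ∈ S.m j ⊔ S.m k, f X ∈ S.m j ⊔ S.m k)
    (hf_sq : ∀ X ∈ S.m j ⊔ S.m k, f (f X) = -X)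
    (hne : ∃ X ∈ S.msum, ⁅S.p j (f X), S.p k (f (f X))⁆ ≠ 0)
    (a : Fin 3 → ℝ) (ha : ∀ t, 0 < a t) :
    (∀ X ∈ S.msum,
        (1 / 2 : ℝ) • S.projm ⁅f X, f (f X)⁆ + S.U a (f X) (f (f X))
          - f (S.U a (f X) (f X)) = 0)
    ↔ (a j = a k ∧ ∀ X ∈ S.msum, S.projm ⁅f X, f (f X)⁆ = 0) := by
  have mjk_le : S.m j ⊔ S.m k ≤ S.msum := sup_le (aux_m_le_msum S j) (aux_m_le_msum S k)
  have himg : ∀ X ∈ S.msum, f X ∈ S.m j ⊔ S.m k := by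
    intro X hX
    have hmod : ∀ t : Fin 3, ∀ w ∈ S.m t, f w ∈ S.m j ⊔ S.m k := by
      intro t w hw
      rcases fin3_cover hij hjk hik t with rfl | rfl | rfl
      · rw [hf_zero w hw]; exact zero_mem _
      · exact hf_inv w (Submodule.mem_sup_left hw)
      · exact hf_inv w (Submodule.mem_sup_right hw)
    have hX' : X ∈ S.m 0 ⊔ S.m 1 ⊔ S.m 2 := hX
    rcases Submodule.mem_sup.1 hX' with ⟨y, hy, z2, hz2, rfl⟩
    rcases Submodule.mem_sup.1 hy with ⟨u, hu, v, hv, rfl⟩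
    rw [map_add, map_add]
    exact add_mem (add_mem (hmod 0 u hu) (hmod 1 v hv)) (hmod 2 z2 hz2)
  have main : ∀ Y ∈ S.m j ⊔ S.m k, ∀ Z ∈ S.m j ⊔ S.m k,
      S.projm ⁅Y, Z⁆ = ⁅S.p j Y, S.p k Z⁆ - ⁅S.p j Z, S.p k Y⁆ := by
    intro Y hY Z hZ
    obtain ⟨hYsum, hYi⟩ := aux_decomp S hij hjk hik hY
    obtain ⟨hZsum, hZi⟩ := aux_decomp S hij hjk hik hZ
    have hYj := S.p_mem j Y; have hYk := S.p_mem k Y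
    have hZj := S.p_mem j Z; have hZk := S.p_mem k Z
    calc S.projm ⁅Y, Z⁆
        = S.projm ⁅S.p j Y + S.p k Y, S.p j Z + S.p k Z⁆ := by rw [hYsum, hZsum]
      _ = S.projm (⁅S.p j Y, S.p j Z⁆ + ⁅S.p j Y, S.p k Z⁆ +
            ⁅S.p k Y, S.p j Z⁆ + ⁅S.p k Y, S.p k Z⁆) := by
          congr 1; simp only [lie_add, add_lie]; abel
      _ = S.projm ⁅S.p j Y, S.p j Z⁆ + S.projm ⁅S.p j Y, S.p k Z⁆ +
            S.projm ⁅S.p k Y, S.p j Z⁆ + S.projm ⁅S.p k Y, S.p k Z⁆ := by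
          rw [aux_projm_add, aux_projm_add, aux_projm_add]
      _ = 0 + ⁅S.p j Y, S.p k Z⁆ + ⁅S.p k Y, S.p j Z⁆ + 0 := by
          rw [aux_projm_of_h S (S.bracket_h j _ hYj _ hZj),
              aux_projm_of_mem S (aux_bracket_mem S hij hjk hik hYj hZk),
              aux_projm_of_mem S (aux_bracket_mem S hik (Ne.symm hjk) hij hYk hZj),
              aux_projm_of_h S (S.bracket_h k _ hYk _ hZk)]
      _ = ⁅S.p j Y, S.p k Z⁆ - ⁅S.p j Z, S.p k Y⁆ := by
          rw [← lie_skew (S.p k Y) (S.p j Z)]; abel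
  have hUzz : ∀ Y ∈ S.m j ⊔ S.m k, f (S.U a Y Y) = 0 := by
    intro Y hY
    obtain ⟨-, hYi⟩ := aux_decomp S hij hjk hik hY
    rw [aux_U_formula S hij hjk hik a hYi hYi]
    apply hf_zero
    exact Submodule.smul_mem _ _ (add_mem
      (aux_bracket_mem S hij hjk hik (S.p_mem j Y) (S.p_mem k Y))
      (aux_bracket_mem S hij hjk hik (S.p_mem j Y) (S.p_mem k Y)))
  constructor
  · intro H
    have E : ∀ X ∈ S.msum,
        (1/2 : ℝ) • (⁅S.p j (f X), S.p k (f (f X))⁆ - ⁅S.p j (f (f X)), S.p k (f X)⁆)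
          + ((a k - a j) / (2 * a i)) •
            (⁅S.p j (f X), S.p k (f (f X))⁆ + ⁅S.p j (f (f X)), S.p k (f X)⁆) = 0 := by
      intro X hX
      have hY := himg X hX
      have hZ : f (f X) ∈ S.m j ⊔ S.m k := hf_inv _ hY
      have h1 := main (f X) hY (f (f X)) hZ
      have h2 := aux_U_formula S hij hjk hik a
        (aux_decomp S hij hjk hik hY).2 (aux_decomp S hij hjk hik hZ).2
      have h3 := hUzz (f X) hY
      have h0 := H X hX
      rw [h1, h2, h3, sub_zero] at h0
      exact h0
    have E2 : ∀ X ∈ S.msum,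
        (⁅S.p j (f X), S.p k (f (f X))⁆ - ⁅S.p j (f (f X)), S.p k (f X)⁆ = 0) ∧
        ((a k - a j) / (2 * a i)) •
          (⁅S.p j (f X), S.p k (f (f X))⁆ + ⁅S.p j (f (f X)), S.p k (f X)⁆) = 0 := by
      intro X hX
      have hY := himg X hX
      have e1 := E X hX
      have e2 := E (f X) (mjk_le hY)
      rw [hf_sq (f X) hY] at e2
      simp only [map_neg, lie_neg, neg_lie, neg_neg] at e2
      constructor
      · linear_combination (norm := module) e1 + e2
      · linear_combination (norm := module) ((1:ℝ)/2) • e1 - ((1:ℝ)/2) • e2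
    refine ⟨?_, ?_⟩
    · obtain ⟨X0, hX0, hPne⟩ := hne
      obtain ⟨hPQ, hlPQ⟩ := E2 X0 hX0
      have hP : ((2:ℝ) * ((a k - a j) / (2 * a i))) •
          ⁅S.p j (f X0), S.p k (f (f X0))⁆ = 0 := by
        linear_combination (norm := module) hlPQ + ((a k - a j) / (2 * a i)) • hPQ
      rcases smul_eq_zero.1 hP with h | h
      · have hai : a i ≠ 0 := (ha i).ne'
        field_simp at h
        linarith
      · exact absurd h hPne
    · intro X hX
      have hY := himg X hX
      rw [main (f X) hY (f (f X)) (hf_inv _ hY)]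
      exact (E2 X hX).1
  · rintro ⟨hajk, hzero⟩ X hX
    have hY := himg X hX
    have hZ : f (f X) ∈ S.m j ⊔ S.m k := hf_inv _ hY
    rw [aux_U_formula S hij hjk hik a
        (aux_decomp S hij hjk hik hY).2 (aux_decomp S hij hjk hik hZ).2,
      hUzz (f X) hY, hzero X hX]
    simp [hajk]
end

section
/- For every X ∈ m the bracket [f₄X, f₄²X] lies in h; equivalently, its projection onto m along h vanishes: [f₄X, f₄²X]_m = 0. -/
namespace SO4

/-- The matrix `E_{pq}` with `1` in position `(p,q)` and `0` elsewhere (indices `0,…,3`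
correspond to the paper's `1,…,4`). -/
def E (p q : Fin 4) : Matrix (Fin 4) (Fin 4) ℝ := Matrix.single p q 1

/-- The element of `m` with coordinates `(a, b₁, b₂, c₁, c₂)`. -/
noncomputable def M (a b1 b2 c1 c2 : ℝ) : Matrix (Fin 4) (Fin 4) ℝ :=
  a • (E 0 1 - E 1 0) + b1 • (E 0 2 - E 2 0) + b2 • (E 0 3 - E 3 0) +
    c1 • (E 1 2 - E 2 1) + c2 • (E 1 3 - E 3 1)

/-- `h = span{E₃₄ − E₄₃}`, the embedded `so(2)`. -/
def hsub : Submodule ℝ (Matrix (Fin 4) (Fin 4) ℝ) := Submodule.span ℝ {E 2 3 - E 3 2}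

/-- `m₁ = span{E₁₂ − E₂₁}`. -/
def m1 : Submodule ℝ (Matrix (Fin 4) (Fin 4) ℝ) := Submodule.span ℝ {E 0 1 - E 1 0}

/-- `m₂ = span{E₁₃ − E₃₁, E₁₄ − E₄₁}`. -/
def m2 : Submodule ℝ (Matrix (Fin 4) (Fin 4) ℝ) :=
  Submodule.span ℝ {E 0 2 - E 2 0, E 0 3 - E 3 0}

/-- `m₃ = span{E₂₃ − E₃₂, E₂₄ − E₄₂}`. -/
def m3 : Submodule ℝ (Matrix (Fin 4) (Fin 4) ℝ) :=
  Submodule.span ℝ {E 1 2 - E 2 1, E 1 3 - E 3 1}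

/-- `m = m₁ ⊕ m₂ ⊕ m₃`. -/
def msum : Submodule ℝ (Matrix (Fin 4) (Fin 4) ℝ) := m1 ⊔ m2 ⊔ m3

/-- The projection of `X ∈ so(4)` onto `m` along `h` (read off the coordinates
`a = X₁₂, b₁ = X₁₃, b₂ = X₁₄, c₁ = X₂₃, c₂ = X₂₄`). -/
noncomputable def projm (X : Matrix (Fin 4) (Fin 4) ℝ) : Matrix (Fin 4) (Fin 4) ℝ :=
  M (X 0 1) (X 0 2) (X 0 3) (X 1 2) (X 1 3)

/-- The `m₁`-component of `X ∈ m`. -/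
noncomputable def P1 (X : Matrix (Fin 4) (Fin 4) ℝ) : Matrix (Fin 4) (Fin 4) ℝ :=
  M (X 0 1) 0 0 0 0

/-- The `m₂`-component of `X ∈ m`. -/
noncomputable def P2 (X : Matrix (Fin 4) (Fin 4) ℝ) : Matrix (Fin 4) (Fin 4) ℝ :=
  M 0 (X 0 2) (X 0 3) 0 0

/-- The `m₃`-component of `X ∈ m`. -/
noncomputable def P3 (X : Matrix (Fin 4) (Fin 4) ℝ) : Matrix (Fin 4) (Fin 4) ℝ :=
  M 0 0 0 (X 1 2) (X 1 3)

/-- `f₁(a,b₁,b₂,c₁,c₂) = (0, b₂, −b₁, 0, 0)`, acting on `m`. -/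
noncomputable def f1 (X : Matrix (Fin 4) (Fin 4) ℝ) : Matrix (Fin 4) (Fin 4) ℝ :=
  M 0 (X 0 3) (-(X 0 2)) 0 0

/-- `f₂(a,b₁,b₂,c₁,c₂) = (0, 0, 0, c₂, −c₁)`, acting on `m`. -/
noncomputable def f2 (X : Matrix (Fin 4) (Fin 4) ℝ) : Matrix (Fin 4) (Fin 4) ℝ :=
  M 0 0 0 (X 1 3) (-(X 1 2))

/-- `f₃(a,b₁,b₂,c₁,c₂) = (0, b₂, −b₁, c₂, −c₁)`, acting on `m`. -/
noncomputable def f3 (X : Matrix (Fin 4) (Fin 4) ℝ) : Matrix (Fin 4) (Fin 4) ℝ :=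
  M 0 (X 0 3) (-(X 0 2)) (X 1 3) (-(X 1 2))

/-- `f₄(a,b₁,b₂,c₁,c₂) = (0, b₂, −b₁, −c₂, c₁)`, acting on `m`. -/
noncomputable def f4 (X : Matrix (Fin 4) (Fin 4) ℝ) : Matrix (Fin 4) (Fin 4) ℝ :=
  M 0 (X 0 3) (-(X 0 2)) (-(X 1 3)) (X 1 2)

end SO4

/-!
The bracket of two elements of `m₂ ⊕ m₃` lies in `m₁ ⊕ h`. Since `f₄` only sees the
`m₂ ⊕ m₃`-coordinates and squares to `-1` there, the `m₁`-component of `[f₄X, f₄²X]` cancels,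
leaving `(b₁² + b₂² − c₁² − c₂²) (E₃₄ − E₄₃) ∈ h`; and `h` is the kernel of the projection onto `m`.
-/

namespace SO4

lemma M_eq_matrix (a b1 b2 c1 c2 : ℝ) :
    M a b1 b2 c1 c2 = !![0, a, b1, b2; -a, 0, c1, c2; -b1, -c1, 0, 0; -b2, -c2, 0, 0] := by
  ext i j
  fin_cases i <;> fin_cases j <;> simp [M, E, Matrix.single]

lemma f4_M (a b1 b2 c1 c2 : ℝ) : f4 (M a b1 b2 c1 c2) = M 0 b2 (-b1) (-c2) c1 := by
  simp [f4, M_eq_matrix]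

lemma lie_M_zero_M_zero (b1 b2 c1 c2 b1' b2' c1' c2' : ℝ) :
    ⁅M 0 b1 b2 c1 c2, M 0 b1' b2' c1' c2'⁆ =
      (b1' * c1 + b2' * c2 - b1 * c1' - b2 * c2') • (E 0 1 - E 1 0) +
        (b1' * b2 - b1 * b2' + c1' * c2 - c1 * c2') • (E 2 3 - E 3 2) := by
  rw [M_eq_matrix, M_eq_matrix, Ring.lie_def]
  ext i j
  fin_cases i <;> fin_cases j <;> simp [E, Matrix.single] <;> ring

lemma lie_f4_f4_eq_smul (X : Matrix (Fin 4) (Fin 4) ℝ) :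
    ⁅f4 X, f4 (f4 X)⁆ =
      (X 0 2 ^ 2 + X 0 3 ^ 2 - X 1 2 ^ 2 - X 1 3 ^ 2) • (E 2 3 - E 3 2) := by
  rw [f4, f4_M, lie_M_zero_M_zero]
  ring_nf
  simp

lemma projm_eq_zero_of_mem_hsub {Y : Matrix (Fin 4) (Fin 4) ℝ} (hY : Y ∈ hsub) :
    projm Y = 0 := by
  obtain ⟨c, rfl⟩ := Submodule.mem_span_singleton.mp hY
  simp [projm, M, E, Matrix.single]

end SO4

open SO4 in
/-- for every `X ∈ m` the bracket `[f₄X, f₄²X]` lies in `h`; equivalently,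
its projection onto `m` along `h` vanishes: `[f₄X, f₄²X]_m = 0`. -/
theorem statement10 :
    ∀ X ∈ msum, ⁅f4 X, f4 (f4 X)⁆ ∈ hsub ∧ projm ⁅f4 X, f4 (f4 X)⁆ = 0 := by
  intro X _
  have hmem : ⁅f4 X, f4 (f4 X)⁆ ∈ hsub := by
    rw [lie_f4_f4_eq_smul]
    exact Submodule.smul_mem _ _ (Submodule.mem_span_singleton_self _)
  exact ⟨hmem, projm_eq_zero_of_mem_hsub hmem⟩
end

section
/- There exists X ∈ m such that the projection of [f₃X, f₃²X] onto m along h is nonzero: [f₃X, f₃²X]_m ≠ 0. Consequently f₃ fails the nearly Kähler bracket condition. -/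
namespace SO4

/-! `f₃` acts as a complex structure on `m₂` and on `m₃`, and the `m₁`-coordinate of a bracket
of two elements of `m` comes only from `[m₂, m₃]`. For `[f₃X, f₃²X] = -[f₃X, X]` this
coordinate is `2 (b₂c₁ - b₁c₂)`, which is nonzero at `X = (E₁₃ - E₃₁) + (E₂₄ - E₄₂)`. -/

section Coordinates

variable (a b1 b2 c1 c2 : ℝ)

lemma M_eq : M a b1 b2 c1 c2 =
    !![0, a, b1, b2; -a, 0, c1, c2; -b1, -c1, 0, 0; -b2, -c2, 0, 0] := by
  ext i j
  fin_cases i <;> fin_cases j <;> simp [M, E]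

lemma M_mem_msum : M a b1 b2 c1 c2 ∈ msum := by
  have h1 : a • (E 0 1 - E 1 0) ∈ m1 := Submodule.smul_mem _ _ (Submodule.mem_span_singleton_self _)
  have h2 : b1 • (E 0 2 - E 2 0) + b2 • (E 0 3 - E 3 0) ∈ m2 :=
    Submodule.add_mem _ (Submodule.smul_mem _ _ (Submodule.subset_span (by simp)))
      (Submodule.smul_mem _ _ (Submodule.subset_span (by simp)))
  have h3 : c1 • (E 1 2 - E 2 1) + c2 • (E 1 3 - E 3 1) ∈ m3 :=
    Submodule.add_mem _ (Submodule.smul_mem _ _ (Submodule.subset_span (by simp)))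
      (Submodule.smul_mem _ _ (Submodule.subset_span (by simp)))
  have hM : M a b1 b2 c1 c2 = a • (E 0 1 - E 1 0) + (b1 • (E 0 2 - E 2 0) + b2 • (E 0 3 - E 3 0)) +
      (c1 • (E 1 2 - E 2 1) + c2 • (E 1 3 - E 3 1)) := by
    simp only [M]; abel
  rw [hM]
  exact Submodule.add_mem_sup (Submodule.add_mem_sup h1 h2) h3

lemma f3_M : f3 (M a b1 b2 c1 c2) = M 0 b2 (-b1) c2 (-c1) := by
  simp [f3, M_eq]

lemma f3_f3_M : f3 (f3 (M a b1 b2 c1 c2)) = M 0 (-b1) (-b2) (-c1) (-c2) := by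
  rw [f3_M, f3_M]

lemma projm_apply_zero_one (X : Matrix (Fin 4) (Fin 4) ℝ) : projm X 0 1 = X 0 1 := by
  simp [projm, M_eq]

lemma lie_M_M_apply_zero_one (a' b1' b2' c1' c2' : ℝ) :
    ⁅M a b1 b2 c1 c2, M a' b1' b2' c1' c2'⁆ 0 1 = b1' * c1 + b2' * c2 - b1 * c1' - b2 * c2' := by
  simp [M_eq, Ring.lie_def]
  ring

lemma projm_lie_f3_apply_zero_one :
    projm ⁅f3 (M a b1 b2 c1 c2), f3 (f3 (M a b1 b2 c1 c2))⁆ 0 1 = 2 * (b2 * c1 - b1 * c2) := by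
  rw [projm_apply_zero_one, f3_f3_M, f3_M, lie_M_M_apply_zero_one]
  ring

end Coordinates

end SO4

open SO4 in
/-- there exists `X ∈ m` such that the projection of `[f₃X, f₃²X]` onto `m`
along `h` is nonzero, so `f₃` fails the nearly Kähler bracket condition. -/
theorem statement12 :
    ∃ X ∈ msum, projm ⁅f3 X, f3 (f3 X)⁆ ≠ 0 := by
  refine ⟨M 0 1 0 0 1, M_mem_msum _ _ _ _ _, fun h => ?_⟩
  have h01 := projm_lie_f3_apply_zero_one 0 1 0 0 1
  rw [h] at h01
  norm_num at h01
end
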